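/- arXiv:1804.02140 — 6 statements merged into one kernel-verified Lean document; each statement's English description precedes it below -/
import Mathlib

section
/- Let F be a field, G ∈ M_{m×n}(F) and F₀ ∈ M_{k×n}(F). The following are equivalent: (a) there exists H ∈ M_{m×k}(F) with G = H·F₀; (b) the row space of G is contained in the row space of F₀; (c) N(F₀) ⊆ N(G), where N(M) = {v ∈ Fⁿ : Mv = 0}; (d) rank(F₀) equals the rank of the (m+k)×n matrix obtained by stacking G above F₀. Moreover, if these hold, then every H with G = H·F₀ satisfies rank(G) ≤ rank(H) ≤ rank(G) + min(m − rank(G), k − rank(F₀)), and for every integer r with rank(G) ≤ r ≤ rank(G) + min(m − rank(G), k − rank(F₀)) there exists H ∈ M_{m×k}(F) with G = H·F₀ and rank(H) = r. -/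
/-!
`G = H * F₀` says that `H`, as a map `Fᵏ → Fᵐ`, sends `F₀ x` to `G x`; such a map exists exactly
when `ker F₀ ≤ ker G`, and then the rows of `G` lie in the row space of `F₀`, which a dimension
count turns into the rank criterion. A quotient `H` is determined on `range F₀` and free on a
complement `C` of it, of dimension `k - rank F₀`, and `range H = range G ⊔ H(C)`; this gives the
bounds, and mapping `C` onto an `s`-dimensional subspace of a complement of `range G` gives a
quotient of rank exactly `rank G + s`.
-/

open Module Submodule

namespace LinearMap

variable {K V W U : Type*} [Field K] [AddCommGroup V] [Module K V] [AddCommGroup W] [Module K W]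
  [AddCommGroup U] [Module K U]

theorem exists_finrank_range_eq [FiniteDimensional K V] [FiniteDimensional K W] {s : ℕ}
    (hV : s ≤ finrank K V) (hW : s ≤ finrank K W) :
    ∃ ψ : V →ₗ[K] W, finrank K (range ψ) = s := by
  let p : V →ₗ[K] Fin s → K :=
    funLeft K K (Fin.castLE hV) ∘ₗ (finBasis K V).equivFun.toLinearMap
  let i : (Fin s → K) →ₗ[K] W :=
    (finBasis K W).equivFun.symm.toLinearMap ∘ₗ
      Function.ExtendByZero.linearMap K (Fin.castLE hW : Fin s → Fin (finrank K W))
  have hp : range p = ⊤ := range_eq_top.2 <|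
    (funLeft_surjective_of_injective K K _ (Fin.castLE_injective hV)).comp
      (finBasis K V).equivFun.surjective
  have hi : Function.Injective i :=
    (finBasis K W).equivFun.symm.injective.comp <|
      Function.extend_injective (Fin.castLE_injective hW) 0
  exact ⟨i ∘ₗ p, by rw [range_comp_of_range_eq_top i hp, finrank_range_of_inj hi, finrank_fin_fun]⟩

theorem exists_comp_rangeRestrict_eq_of_ker_le {f : V →ₗ[K] W} {g : V →ₗ[K] U}
    (hker : ker f ≤ ker g) :
    ∃ φ : range f →ₗ[K] U, φ ∘ₗ f.rangeRestrict = g ∧ range φ = range g := by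
  refine ⟨(ker f).liftQ g hker ∘ₗ f.quotKerEquivRange.symm.toLinearMap, ?_, ?_⟩
  · ext x
    change (ker f).liftQ g hker (f.quotKerEquivRange.symm ⟨f x, mem_range_self f x⟩) = g x
    rw [quotKerEquivRange_symm_apply_image]
    exact liftQ_apply _ _ _
  · rw [range_comp_of_range_eq_top _ (LinearEquiv.range _), range_liftQ]

theorem exists_comp_eq_of_ker_le {f : V →ₗ[K] W} {g : V →ₗ[K] U} (hker : ker f ≤ ker g) :
    ∃ h : W →ₗ[K] U, h ∘ₗ f = g := by
  obtain ⟨φ, hφf, -⟩ := exists_comp_rangeRestrict_eq_of_ker_le hker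
  obtain ⟨C, hC⟩ := (range f).exists_isCompl
  refine ⟨ofIsCompl hC φ 0, ?_⟩
  ext x
  exact (ofIsCompl_apply_left hC (f.rangeRestrict x)).trans (congr($hφf x))

theorem finrank_range_le_finrank_range_comp_add [FiniteDimensional K W] (f : V →ₗ[K] W)
    (h : W →ₗ[K] U) :
    finrank K (range h) ≤ finrank K (range (h ∘ₗ f)) + (finrank K W - finrank K (range f)) := by
  obtain ⟨C, hC⟩ := (range f).exists_isCompl
  have hrange : range h = range (h ∘ₗ f) ⊔ C.map h := by
    rw [range_comp, ← Submodule.map_sup, hC.codisjoint.eq_top, range_eq_map]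
  have hCdim := finrank_add_eq_of_isCompl hC
  have : FiniteDimensional K (range (h ∘ₗ f)) :=
    Submodule.finiteDimensional_of_le (range_comp_le_range f h)
  calc finrank K (range h)
      ≤ finrank K (range (h ∘ₗ f)) + finrank K (C.map h) :=
        hrange ▸ finrank_add_le_finrank_add_finrank _ _
    _ ≤ finrank K (range (h ∘ₗ f)) + (finrank K W - finrank K (range f)) := by
        have := finrank_map_le h C
        omega

theorem exists_comp_eq_finrank_range_eq [FiniteDimensional K W] [FiniteDimensional K U]
    {f : V →ₗ[K] W} {g : V →ₗ[K] U} (hker : ker f ≤ ker g) {r : ℕ}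
    (hg : finrank K (range g) ≤ r) (hU : r ≤ finrank K U)
    (hW : r ≤ finrank K (range g) + (finrank K W - finrank K (range f))) :
    ∃ h : W →ₗ[K] U, h ∘ₗ f = g ∧ finrank K (range h) = r := by
  obtain ⟨φ, hφf, hφ⟩ := exists_comp_rangeRestrict_eq_of_ker_le hker
  obtain ⟨C, hC⟩ := (range f).exists_isCompl
  obtain ⟨D, hD⟩ := (range g).exists_isCompl
  have hCdim := finrank_add_eq_of_isCompl hC
  have hDdim := finrank_add_eq_of_isCompl hD
  obtain ⟨ψ, hψ⟩ :=
    exists_finrank_range_eq (K := K) (V := C) (W := D) (s := r - finrank K (range g))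
      (by omega) (by omega)
  refine ⟨ofIsCompl hC φ (D.subtype ∘ₗ ψ), ?_, ?_⟩
  · ext x
    exact (ofIsCompl_apply_left hC (f.rangeRestrict x)).trans (congr($hφf x))
  · have hdisj : Disjoint (range g) (range (D.subtype ∘ₗ ψ)) :=
      hD.disjoint.mono_right (by rw [range_comp]; exact map_subtype_le D _)
    have hsup := finrank_sup_add_finrank_inf_eq (range g) (range (D.subtype ∘ₗ ψ))
    rw [hdisj.eq_bot, finrank_bot, range_comp, finrank_map_subtype_eq, hψ] at hsup
    rw [range_ofIsCompl, hφ, range_comp]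
    omega

end LinearMap

theorem Submodule.finrank_eq_finrank_sup_iff_le {K V : Type*} [Field K] [AddCommGroup V]
    [Module K V] [FiniteDimensional K V] {p q : Submodule K V} :
    finrank K q = finrank K ↥(p ⊔ q) ↔ p ≤ q := by
  refine ⟨fun h => ?_, fun h => by rw [sup_eq_right.2 h]⟩
  exact le_sup_left.trans (eq_of_le_of_finrank_eq le_sup_right h).ge

namespace Matrix

variable {m n o : Type*} [Fintype o]

theorem exists_mul_eq_iff_span_range_le {R : Type*} [Semiring R] (G : Matrix m n R)
    (A : Matrix o n R) :
    (∃ H : Matrix m o R, G = H * A) ↔ span R (Set.range G) ≤ span R (Set.range A) := by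
  have hrow : ∀ v, v ∈ span R (Set.range A) ↔ ∃ c, c ᵥ* A = v := fun v => by
    change v ∈ span R (Set.range A.row) ↔ _
    rw [← range_vecMulLinear, LinearMap.mem_range]
    rfl
  rw [span_le]
  refine ⟨fun ⟨H, hH⟩ => ?_, fun h => ?_⟩
  · rintro _ ⟨i, rfl⟩
    exact (hrow _).2 ⟨H i, by rw [hH, mul_apply_eq_vecMul]⟩
  choose H hH using fun i => (hrow (G i)).1 (h ⟨i, rfl⟩)
  exact ⟨of H, funext fun i => by rw [mul_apply_eq_vecMul]; exact (hH i).symm⟩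

variable {K : Type*} [Field K] [Fintype n]

theorem rank_eq_rank_fromRows_iff [Finite m] (G : Matrix m n K) (A : Matrix o n K) :
    A.rank = (fromRows G A).rank ↔ span K (Set.range G) ≤ span K (Set.range A) := by
  rw [rank_eq_finrank_span_row, rank_eq_finrank_span_row, row_def, row_def,
    show Set.range (fromRows G A) = Set.range G ∪ Set.range A from Set.Sum.elim_range G A,
    span_union, Submodule.finrank_eq_finrank_sup_iff_le]

theorem rank_le_rank_mul_add (H : Matrix m o K) (A : Matrix o n K) :
    H.rank ≤ (H * A).rank + (Fintype.card o - A.rank) := by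
  have := LinearMap.finrank_range_le_finrank_range_comp_add A.mulVecLin H.mulVecLin
  rwa [← mulVecLin_mul, finrank_fintype_fun_eq_card] at this

variable [DecidableEq o]

theorem eq_mul_toMatrix'_of_comp_eq {G : Matrix m n K} {A : Matrix o n K}
    {h : (o → K) →ₗ[K] m → K} (hh : h ∘ₗ A.mulVecLin = G.mulVecLin) :
    G = LinearMap.toMatrix' h * A := by
  classical
  apply toLin'.injective
  rw [toLin'_mul, toLin'_toMatrix', toLin'_apply', toLin'_apply', hh]

theorem exists_mul_eq_iff_ker_mulVecLin_le (G : Matrix m n K) (A : Matrix o n K) :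
    (∃ H : Matrix m o K, G = H * A) ↔ LinearMap.ker A.mulVecLin ≤ LinearMap.ker G.mulVecLin := by
  refine ⟨fun ⟨H, hH⟩ => hH ▸ mulVecLin_mul H A ▸ LinearMap.ker_le_ker_comp _ _, fun hker => ?_⟩
  obtain ⟨h, hh⟩ := LinearMap.exists_comp_eq_of_ker_le hker
  exact ⟨_, eq_mul_toMatrix'_of_comp_eq hh⟩

theorem exists_mul_eq_rank_eq [Fintype m] {G : Matrix m n K} {A : Matrix o n K}
    (hker : LinearMap.ker A.mulVecLin ≤ LinearMap.ker G.mulVecLin) {r : ℕ} (hG : G.rank ≤ r)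
    (hm : r ≤ Fintype.card m) (ho : r ≤ G.rank + (Fintype.card o - A.rank)) :
    ∃ H : Matrix m o K, G = H * A ∧ H.rank = r := by
  obtain ⟨h, hh, hrank⟩ := LinearMap.exists_comp_eq_finrank_range_eq hker hG
    (by rwa [finrank_fintype_fun_eq_card]) (by rwa [finrank_fintype_fun_eq_card])
  refine ⟨_, eq_mul_toMatrix'_of_comp_eq hh, ?_⟩
  rwa [rank, ← toLin'_apply', toLin'_toMatrix']

end Matrix

/-- Botha, matrix division. Let `F` be a field, `G ∈ M_{m×n}(F)` and
`F₀ ∈ M_{k×n}(F)`. The following are equivalent: (a) `G = H * F₀` for some `H`;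
(b) the row space of `G` is contained in the row space of `F₀`; (c) `ker F₀ ⊆ ker G`;
(d) `rank F₀ = rank [G; F₀]` (stacked). Moreover, if these hold, every quotient `H`
satisfies `rank G ≤ rank H ≤ rank G + min (m - rank G) (k - rank F₀)`, and a quotient of
every rank in this range exists. -/
theorem stmt6 {m n k : ℕ} {F : Type*} [Field F]
    (G : Matrix (Fin m) (Fin n) F) (F₀ : Matrix (Fin k) (Fin n) F) :
    ((∃ H : Matrix (Fin m) (Fin k) F, G = H * F₀) ↔
      Submodule.span F (Set.range G) ≤ Submodule.span F (Set.range F₀)) ∧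
    ((∃ H : Matrix (Fin m) (Fin k) F, G = H * F₀) ↔
      LinearMap.ker F₀.mulVecLin ≤ LinearMap.ker G.mulVecLin) ∧
    ((∃ H : Matrix (Fin m) (Fin k) F, G = H * F₀) ↔
      F₀.rank = (Matrix.fromRows G F₀).rank) ∧
    ((∃ H : Matrix (Fin m) (Fin k) F, G = H * F₀) →
      (∀ H : Matrix (Fin m) (Fin k) F, G = H * F₀ →
        G.rank ≤ H.rank ∧ H.rank ≤ G.rank + min (m - G.rank) (k - F₀.rank)) ∧
      (∀ r : ℕ, G.rank ≤ r → r ≤ G.rank + min (m - G.rank) (k - F₀.rank) →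
        ∃ H : Matrix (Fin m) (Fin k) F, G = H * F₀ ∧ H.rank = r)) := by
  have hspan := Matrix.exists_mul_eq_iff_span_range_le G F₀
  have hker := Matrix.exists_mul_eq_iff_ker_mulVecLin_le G F₀
  have hGm : G.rank ≤ m := Matrix.rank_le_height G
  refine ⟨hspan, hker, hspan.trans (Matrix.rank_eq_rank_fromRows_iff G F₀).symm,
    fun hG => ⟨fun H hH => ?_, fun r hGr hr => ?_⟩⟩
  · have hHm : H.rank ≤ m := Matrix.rank_le_height H
    have hHk := Matrix.rank_le_rank_mul_add H F₀
    rw [← hH, Fintype.card_fin] at hHk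
    exact ⟨hH ▸ Matrix.rank_mul_le_left H F₀, by omega⟩
  · exact Matrix.exists_mul_eq_rank_eq (hker.1 hG) hGr (by rw [Fintype.card_fin]; omega)
      (by rw [Fintype.card_fin]; omega)
end

section
/- Let F be a field and G, F₀ ∈ M_{m×n}(F), and suppose there exists a square-zero matrix H ∈ M_m(F) with G = H·F₀. Let b = min(⌊m/2⌋, m − (rank([G F₀]) − rank(G))), where [G F₀] is the m×2n matrix obtained by placing G and F₀ side by side. Then every square-zero H ∈ M_m(F) with G = H·F₀ satisfies rank(G) ≤ rank(H) ≤ b, and conversely for every integer r with rank(G) ≤ r ≤ b there exists a square-zero H ∈ M_m(F) with G = H·F₀ and rank(H) = r. -/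
/-!
Pass to linear maps on `V = F^m` and let `W` be the column space of `F₀`; for every square-zero
quotient `h` the column space of `G` is `h(W)`. Since `range h ⊆ ker h`, rank-nullity gives
`2 rank h ≤ m`, and since `h` maps `W + h(W)` onto `h(W)` with kernel inside `ker h`, also
`rank h + dim (W + h(W)) ≤ m + dim h(W)`.

Conversely, composing a given quotient `h₀` with a projection onto `S = W + h₀(W)` gives a
quotient `p` of the minimal rank `dim h₀(W)`. To raise the rank by `k`, add a map `g` whose kernel
is a subspace `K ⊇ S` of codimension `k` and whose range is a `k`-dimensional `T ⊆ K ∩ ker p`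
meeting `range p` trivially: then `p + g` is still square-zero, agrees with `p` on `S`, and has
range `range p ⊕ T`.
-/

open Module Submodule LinearMap

namespace Submodule

variable {F V : Type*} [Field F] [AddCommGroup V] [Module F V]

theorem exists_le_finrank_eq (X : Submodule F V) {k : ℕ} (hk : k ≤ finrank F X) :
    ∃ T ≤ X, finrank F T = k := by
  obtain ⟨f, hf⟩ := exists_linearIndependent_of_le_finrank hk
  refine ⟨span F (Set.range (X.subtype ∘ f)), ?_, ?_⟩
  · rw [span_le]
    rintro _ ⟨i, rfl⟩
    exact (f i).2
  · rw [finrank_span_eq_card (hf.map' X.subtype X.ker_subtype), Fintype.card_fin]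

variable [FiniteDimensional F V]

theorem exists_le_disjoint_finrank_eq (X R : Submodule F V) {k : ℕ}
    (hk : k + finrank F R ≤ finrank F X) : ∃ T ≤ X, Disjoint T R ∧ finrank F T = k := by
  obtain ⟨R', hR'⟩ := R.exists_isCompl
  have := finrank_sup_add_finrank_inf_eq X R'
  have := finrank_add_eq_of_isCompl hR'
  have := (X ⊔ R').finrank_le
  obtain ⟨T, hT, hTk⟩ := exists_le_finrank_eq (X ⊓ R') (k := k) (by omega)
  exact ⟨T, hT.trans inf_le_left, hR'.disjoint.symm.mono_left (hT.trans inf_le_right), hTk⟩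

theorem exists_ge_finrank_eq (S : Submodule F V) {n : ℕ} (h₁ : finrank F S ≤ n)
    (h₂ : n ≤ finrank F V) : ∃ K, S ≤ K ∧ finrank F K = n := by
  obtain ⟨T, -, hST, hT⟩ := exists_le_disjoint_finrank_eq ⊤ S (k := n - finrank F S)
    (by rw [finrank_top]; omega)
  refine ⟨S ⊔ T, le_sup_left, ?_⟩
  have := finrank_sup_add_finrank_inf_eq S T
  rw [hST.symm.eq_bot, finrank_bot] at this
  omega

end Submodule

namespace LinearMap

section

variable {F V W : Type*} [Field F] [AddCommGroup V] [Module F V] [FiniteDimensional F V]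
  [AddCommGroup W] [Module F W]

theorem exists_ker_eq_range_eq [FiniteDimensional F W] (K : Submodule F V) (T : Submodule F W)
    (h : finrank F T + finrank F K = finrank F V) :
    ∃ g : V →ₗ[F] W, ker g = K ∧ range g = T := by
  have := K.finrank_quotient_add_finrank
  let e : (V ⧸ K) ≃ₗ[F] T := LinearEquiv.ofFinrankEq _ _ (by omega)
  have he : range (e.toLinearMap ∘ₗ K.mkQ) = ⊤ := by
    rw [range_comp_of_range_eq_top _ K.range_mkQ, e.range]
  refine ⟨T.subtype ∘ₗ e.toLinearMap ∘ₗ K.mkQ, ?_, ?_⟩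
  · rw [ker_comp_of_ker_eq_bot _ T.ker_subtype, ker_comp_of_ker_eq_bot _ e.ker, ker_mkQ]
  · rw [range_comp_of_range_eq_top _ he, range_subtype]

theorem finrank_le_finrank_map_add_finrank_ker (f : V →ₗ[F] W) (S : Submodule F V) :
    finrank F S ≤ finrank F (S.map f) + finrank F (ker f) := by
  have hrn := finrank_range_add_finrank_ker (f.domRestrict S)
  have hker : finrank F (ker (f.domRestrict S)) ≤ finrank F (ker f) := by
    rw [ker_domRestrict, ← Submodule.finrank_map_subtype_eq, map_comap_subtype]
    exact Submodule.finrank_mono inf_le_right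
  rw [range_domRestrict] at hrn
  omega

end

section SquareZero

variable {F V : Type*} [Field F] [AddCommGroup V] [Module F V] {f p : V →ₗ[F] V}

theorem map_sup_map_eq_map (hf : f ∘ₗ f = 0) (W : Submodule F V) :
    (W ⊔ W.map f).map f = W.map f := by
  rw [Submodule.map_sup, ← Submodule.map_comp, hf, Submodule.map_zero, sup_bot_eq]

theorem exists_comp_self_eq_zero_eqOn_range_eq (hf : f ∘ₗ f = 0) {S : Submodule F V}
    (hS : S.map f ≤ S) :
    ∃ p : V →ₗ[F] V, p ∘ₗ p = 0 ∧ Set.EqOn p f S ∧ range p = S.map f := by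
  obtain ⟨ρ, hρ⟩ := S.subtype.exists_leftInverse_of_injective S.ker_subtype
  have hρS : ∀ x (hx : x ∈ S), ρ x = ⟨x, hx⟩ := fun x hx => congr($hρ ⟨x, hx⟩)
  have hρ_top : range ρ = ⊤ := eq_top_iff.2 fun x _ => ⟨x, hρS x x.2⟩
  set p := (f ∘ₗ S.subtype) ∘ₗ ρ
  have hpf : Set.EqOn p f S := fun x hx => by simp [p, hρS x hx]
  have hrange : range p = S.map f := by
    rw [range_comp_of_range_eq_top _ hρ_top, range_comp, range_subtype]
  refine ⟨p, range_le_ker_iff.1 ?_, hpf, hrange⟩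
  rintro _ ⟨v, rfl⟩
  rw [mem_ker, hpf (hS (hrange ▸ mem_range_self p v))]
  exact range_le_ker_iff.2 hf (hrange.le.trans map_le_range (mem_range_self p v))

variable [FiniteDimensional F V]

theorem two_mul_finrank_range_le (hf : f ∘ₗ f = 0) :
    2 * finrank F (range f) ≤ finrank F V := by
  have := finrank_range_add_finrank_ker f
  have := Submodule.finrank_mono (range_le_ker_iff.2 hf)
  omega

theorem finrank_range_add_finrank_sup_map_le (hf : f ∘ₗ f = 0) (W : Submodule F V) :
    finrank F (range f) + finrank F ↥(W ⊔ W.map f) ≤ finrank F V + finrank F (W.map f) := by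
  have := finrank_le_finrank_map_add_finrank_ker f (W ⊔ W.map f)
  rw [map_sup_map_eq_map hf] at this
  have := finrank_range_add_finrank_ker f
  omega

theorem exists_comp_self_eq_zero_eqOn_finrank_range_add (hp : p ∘ₗ p = 0) {S : Submodule F V}
    (hpS : S.map p = range p) (hS : range p ≤ S) {k : ℕ}
    (hk₁ : finrank F S + k ≤ finrank F V)
    (hk₂ : 2 * (finrank F (range p) + k) ≤ finrank F V) :
    ∃ h : V →ₗ[F] V, h ∘ₗ h = 0 ∧ Set.EqOn h p S ∧
      finrank F (range h) = finrank F (range p) + k := by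
  obtain ⟨K, hSK, hK⟩ := S.exists_ge_finrank_eq (n := finrank F V - k) (by omega) (by omega)
  have hKp : finrank F V - k - finrank F (range p) ≤ finrank F ↥(K ⊓ ker p) := by
    have := finrank_sup_add_finrank_inf_eq K (ker p)
    have := (K ⊔ ker p).finrank_le
    have := finrank_range_add_finrank_ker p
    omega
  obtain ⟨T, hTKp, hTp, hT⟩ := exists_le_disjoint_finrank_eq (K ⊓ ker p) (range p) (k := k)
    (by omega)
  have hTK : T ≤ K := hTKp.trans inf_le_left
  have hTker : T ≤ ker p := hTKp.trans inf_le_right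
  obtain ⟨g, rfl, rfl⟩ := exists_ker_eq_range_eq K T (by omega)
  have hgS : Set.EqOn (p + g) p S := fun x hx => by
    simp [show g x = 0 from hSK hx]
  have hrange : range (p + g) = range p ⊔ range g := by
    have hp_le : range p ≤ range (p + g) := by
      rintro _ hx
      obtain ⟨s, hs, rfl⟩ := hpS ▸ hx
      exact ⟨s, hgS hs⟩
    have hg_le : range g ≤ range (p + g) := by
      rintro _ ⟨v, rfl⟩
      simpa using sub_mem (mem_range_self (p + g) v) (hp_le (mem_range_self p v))
    exact le_antisymm (range_add_le p g) (sup_le hp_le hg_le)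
  refine ⟨p + g, ?_, hgS, ?_⟩
  · rw [comp_add, add_comp, add_comp, hp, range_le_ker_iff.1 hTker,
      range_le_ker_iff.1 (hS.trans hSK), range_le_ker_iff.1 hTK]
    simp
  · rw [hrange, ← hT]
    have := finrank_sup_add_finrank_inf_eq (range p) (range g)
    rw [hTp.symm.eq_bot, finrank_bot] at this
    omega

theorem exists_comp_self_eq_zero_eqOn_finrank_range_eq (hf : f ∘ₗ f = 0) (W : Submodule F V)
    {r : ℕ} (hr₀ : finrank F (W.map f) ≤ r) (hr₁ : 2 * r ≤ finrank F V)
    (hr₂ : r + finrank F ↥(W ⊔ W.map f) ≤ finrank F V + finrank F (W.map f)) :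
    ∃ h : V →ₗ[F] V, h ∘ₗ h = 0 ∧ Set.EqOn h f W ∧ finrank F (range h) = r := by
  set S := W ⊔ W.map f
  have hWS : W ≤ S := le_sup_left
  have hSf : S.map f = W.map f := map_sup_map_eq_map hf W
  obtain ⟨p, hp, hpf, hpS⟩ :=
    exists_comp_self_eq_zero_eqOn_range_eq hf (hSf.le.trans le_sup_right)
  have hSp : S.map p = range p :=
    SetLike.coe_injective (by rw [map_coe, hpf.image_eq, ← map_coe, hpS])
  rw [hSf] at hpS
  obtain ⟨h, hh, hhp, hhr⟩ := exists_comp_self_eq_zero_eqOn_finrank_range_add hp hSp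
    (hpS.trans_le le_sup_right) (k := r - finrank F (W.map f)) (by omega) (by rw [hpS]; omega)
  refine ⟨h, hh, fun x hx => (hhp (hWS hx)).trans (hpf (hWS hx)), ?_⟩
  rw [hhr, hpS]
  omega

end SquareZero

end LinearMap

namespace Matrix

variable {R l m n : Type*} [CommSemiring R] [Fintype m] [Fintype n]

theorem range_mulVecLin_fromCols {n₁ n₂ : Type*} [Fintype n₁] [Fintype n₂]
    (A₁ : Matrix l n₁ R) (A₂ : Matrix l n₂ R) :
    range (fromCols A₁ A₂).mulVecLin = range A₁.mulVecLin ⊔ range A₂.mulVecLin := by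
  rw [range_mulVecLin, range_mulVecLin, range_mulVecLin, ← span_union, ← Set.Sum.elim_range]
  congr 2
  funext j
  cases j <;> rfl

theorem rank_mul_eq_finrank_map (H : Matrix l m R) (A : Matrix m n R) :
    (H * A).rank = finrank R ((range A.mulVecLin).map H.mulVecLin) := by
  rw [Matrix.rank, mulVecLin_mul, range_comp]

theorem rank_fromCols_mul (H : Matrix m m R) (A : Matrix m n R) :
    (fromCols (H * A) A).rank =
      finrank R ↥(range A.mulVecLin ⊔ (range A.mulVecLin).map H.mulVecLin) := by
  rw [Matrix.rank, range_mulVecLin_fromCols, sup_comm, mulVecLin_mul, range_comp]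

end Matrix

namespace LinearMap

variable {R m : Type*} [CommSemiring R] [Fintype m] [DecidableEq m]

theorem mulVecLin_toMatrix' (f : (m → R) →ₗ[R] m → R) : (toMatrix' f).mulVecLin = f := by
  rw [← Matrix.toLin'_apply', Matrix.toLin'_toMatrix']

theorem rank_toMatrix' (f : (m → R) →ₗ[R] m → R) :
    (toMatrix' f).rank = finrank R (range f) := by
  rw [Matrix.rank, mulVecLin_toMatrix']

theorem toMatrix'_mul_eq_mul_of_eqOn {n : Type*} [Fintype n] [DecidableEq n]
    {f : (m → R) →ₗ[R] m → R} {H : Matrix m m R} {A : Matrix m n R}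
    (hf : Set.EqOn f H.mulVecLin (range A.mulVecLin)) : toMatrix' f * A = H * A := by
  refine Matrix.toLin'.injective (LinearMap.ext fun v => ?_)
  simp only [Matrix.toLin'_apply', Matrix.mulVecLin_mul, mulVecLin_toMatrix', comp_apply]
  exact hf (mem_range_self _ v)

end LinearMap

open Matrix in
/-- Botha. Let `F` be a field and `G, F₀ ∈ M_{m×n}(F)`, and suppose `G` has
a square-zero right quotient with respect to `F₀`. Let
`b = min ⌊m/2⌋ (m - (rank [G F₀] - rank G))`. Then every square-zero `H` with `G = H * F₀`
satisfies `rank G ≤ rank H ≤ b`, and a square-zero quotient of every rank in this range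
exists. -/
theorem stmt8 {m n : ℕ} {F : Type*} [Field F]
    (G F₀ : Matrix (Fin m) (Fin n) F)
    (h : ∃ H : Matrix (Fin m) (Fin m) F, H * H = 0 ∧ G = H * F₀) :
    (∀ H : Matrix (Fin m) (Fin m) F, H * H = 0 → G = H * F₀ →
      G.rank ≤ H.rank ∧
      H.rank ≤ min (m / 2) (m - ((Matrix.fromCols G F₀).rank - G.rank))) ∧
    (∀ r : ℕ, G.rank ≤ r →
      r ≤ min (m / 2) (m - ((Matrix.fromCols G F₀).rank - G.rank)) →
      ∃ H : Matrix (Fin m) (Fin m) F, H * H = 0 ∧ G = H * F₀ ∧ H.rank = r) := by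
  obtain ⟨H₀, hH₀, rfl⟩ := h
  have hsq {H : Matrix (Fin m) (Fin m) F} (hH : H * H = 0) :
      H.mulVecLin ∘ₗ H.mulVecLin = 0 := by
    rw [← mulVecLin_mul, hH, mulVecLin_zero]
  have hm : finrank F (Fin m → F) = m := finrank_fin_fun F
  refine ⟨fun H hH hGH => ?_, fun r hr₀ hr => ?_⟩
  · have := two_mul_finrank_range_le (hsq hH)
    have := finrank_range_add_finrank_sup_map_le (hsq hH) (range F₀.mulVecLin)
    rw [hGH, rank_mul_eq_finrank_map, rank_fromCols_mul]
    exact ⟨Submodule.finrank_mono map_le_range, by rw [Matrix.rank] at *; omega⟩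
  · rw [rank_mul_eq_finrank_map] at hr₀ hr
    rw [rank_fromCols_mul] at hr
    have := (range F₀.mulVecLin ⊔ (range F₀.mulVecLin).map H₀.mulVecLin).finrank_le
    obtain ⟨f, hf, hfW, hfr⟩ := exists_comp_self_eq_zero_eqOn_finrank_range_eq (hsq hH₀)
      (range F₀.mulVecLin) (r := r) hr₀ (by omega) (by omega)
    exact ⟨toMatrix' f, by rw [← toMatrix'_comp, hf, map_zero],
      (toMatrix'_mul_eq_mul_of_eqOn hfW).symm, by rw [rank_toMatrix', hfr]⟩
end

section
/- Let F be a field and G ∈ M_m(F). Then G is a product of finitely many (one or more) square-zero matrices if and only if 2·rank(G) ≤ m (equivalently, rank(G) ≤ nullity(G)). Furthermore, if 2·rank(G) ≤ m, then for any integers r₁, r₂, r₃ with rank(G) ≤ rᵢ and 2rᵢ ≤ m (i = 1, 2, 3) there exist square-zero matrices S₁, S₂, S₃ ∈ M_m(F) with G = S₁S₂S₃ and rank(Sᵢ) = rᵢ; so at most three factors are ever needed. This bound is sharp: every nonzero G ∈ M_m(F) with R(G) = N(G) satisfies 2·rank(G) ≤ m but is not a product of two square-zero matrices. -/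
/-!
Let `k = rank G ≤ m / 2`. Since two proper subspaces never cover the space, there is a
complement `C` of `ker G` with `C ∩ range G = 0`. Let `π` be the projection onto `C` along
`ker G`. Then `G = σ₁ π`, where `σ₁` agrees with `G` on `C` and kills a complement of `C`
containing `range G`; and `π = σ₂ σ₃`, where `σ₃` maps `C` isomorphically onto a `k`-dimensional
`N₁ ⊆ ker G` and `σ₂` maps it back. All three are square-zero of rank `k`; each rank is raised to
`rᵢ` by adding a square-zero map supported on a complement of the subspaces involved, where it
interferes with nothing.

Conversely `S² = 0` means `range S ⊆ ker S`, so `2 rank S ≤ m`, and a product has rank at most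
that of its first factor. If `range G = ker G` and `G = H K` with `H² = K² = 0`, then
`range K ⊆ ker K ⊆ ker G = range G ⊆ range H ⊆ ker H`, so `G = 0`.

Square-zero endomorphisms `σ` are handled through the equivalent condition `range σ ≤ ker σ`.
-/

open Module Submodule LinearMap

section

variable {F V : Type*} [Field F] [AddCommGroup V] [Module F V]

theorem Submodule.exists_le_finrank_eq_s11 (U : Submodule F V) {a : ℕ} (ha : a ≤ finrank F U) :
    ∃ T ≤ U, finrank F T = a := by
  obtain ⟨v, hv⟩ := exists_linearIndependent_of_le_finrank ha
  refine ⟨span F (Set.range (U.subtype ∘ v)), ?_, ?_⟩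
  · rw [span_le]
    rintro _ ⟨i, rfl⟩
    exact (v i).2
  · rw [finrank_span_eq_card (hv.map' U.subtype U.ker_subtype), Fintype.card_fin]

theorem Submodule.exists_disjoint_sup_eq_of_le [FiniteDimensional F V] {A B : Submodule F V}
    (hAB : A ≤ B) :
    ∃ A', Disjoint A A' ∧ A ⊔ A' = B ∧ finrank F A + finrank F A' = finrank F B := by
  obtain ⟨A', hAA', hB⟩ := IsModularLattice.exists_disjoint_and_sup_eq hAB
  refine ⟨A', hAA', hB, ?_⟩
  rw [← hB, ← finrank_sup_add_finrank_inf_eq, disjoint_iff.mp hAA', finrank_bot, add_zero]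

theorem Submodule.exists_finrank_eq_disjoint_disjoint [FiniteDimensional F V]
    (P Q : Submodule F V) {d : ℕ}
    (hP : d + finrank F P ≤ finrank F V) (hQ : d + finrank F Q ≤ finrank F V) :
    ∃ C : Submodule F V, finrank F C = d ∧ Disjoint C P ∧ Disjoint C Q := by
  induction d with
  | zero => exact ⟨⊥, finrank_bot F V, disjoint_bot_left, disjoint_bot_left⟩
  | succ d ih =>
    obtain ⟨C, hC, hCP, hCQ⟩ := ih (by omega) (by omega)
    have sup_ne_top {R : Submodule F V} (hR : d + 1 + finrank F R ≤ finrank F V) : R ⊔ C ≠ ⊤ := by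
      intro h
      have := finrank_add_le_finrank_add_finrank R C
      rw [h, finrank_top] at this
      omega
    obtain ⟨v, hvP, hvQ⟩ : ∃ v, v ∉ P ⊔ C ∧ v ∉ Q ⊔ C := by
      -- a group is never the union of two proper subgroups
      by_contra! hcover
      rcases (AddSubgroupClass.subset_union (H := (⊤ : Submodule F V))).mp
        (fun v _ => (em (v ∈ P ⊔ C)).imp_right (hcover v)) with h | h
      · exact sup_ne_top hP (top_le_iff.mp h)
      · exact sup_ne_top hQ (top_le_iff.mp h)
    have hv : v ≠ 0 := by
      rintro rfl
      exact hvP (zero_mem _)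
    have hvC : Disjoint C (F ∙ v) :=
      (disjoint_span_singleton' hv).mpr (fun h => hvP (mem_sup_right h))
    refine ⟨C ⊔ F ∙ v, ?_, ?_, ?_⟩
    · have := finrank_sup_add_finrank_inf_eq C (F ∙ v)
      rw [disjoint_iff.mp hvC, finrank_bot, finrank_span_singleton hv] at this
      omega
    · exact (hCP.symm.disjoint_sup_right_of_disjoint_sup_left
        ((disjoint_span_singleton' hv).mpr hvP)).symm
    · exact (hCQ.symm.disjoint_sup_right_of_disjoint_sup_left
        ((disjoint_span_singleton' hv).mpr hvQ)).symm

theorem LinearMap.range_add_eq_sup {W : Type*} [AddCommGroup W] [Module F W] {c τ : V →ₗ[F] W}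
    (hker : Codisjoint (ker c) (ker τ)) :
    range (c + τ) = range c ⊔ range τ := by
  refine le_antisymm (range_add_le c τ) (sup_le ?_ ?_)
  all_goals
    rintro _ ⟨v, rfl⟩
    obtain ⟨a, ha, b, hb, rfl⟩ := mem_sup.mp (hker.eq_top ▸ mem_top : v ∈ ker c ⊔ ker τ)
    rw [mem_ker] at ha hb
  · exact ⟨b, by simp [ha, hb]⟩
  · exact ⟨a, by simp [ha, hb]⟩

theorem LinearMap.finrank_range_add [FiniteDimensional F V] {W : Type*} [AddCommGroup W]
    [Module F W] {c τ : V →ₗ[F] W} (hker : Codisjoint (ker c) (ker τ))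
    (hrange : Disjoint (range c) (range τ)) :
    finrank F (range (c + τ)) = finrank F (range c) + finrank F (range τ) := by
  have := finrank_sup_add_finrank_inf_eq (range c) (range τ)
  rw [disjoint_iff.mp hrange, finrank_bot, ← range_add_eq_sup hker] at this
  omega

theorem LinearMap.range_add_le_ker_add {c τ : V →ₗ[F] V}
    (h : range c ⊔ range τ ≤ ker c ⊓ ker τ) : range (c + τ) ≤ ker (c + τ) := by
  rintro _ ⟨v, rfl⟩
  have hc := h (mem_sup_left ⟨v, rfl⟩)
  have hτ := h (mem_sup_right ⟨v, rfl⟩)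
  simp only [mem_inf, mem_ker] at hc hτ
  simp [hc, hτ]

theorem LinearMap.add_comp_add_eq_comp {c₂ τ₂ c₃ τ₃ : V →ₗ[F] V}
    (h₂ : range c₃ ⊔ range τ₃ ≤ ker τ₂) (h₃ : range τ₃ ≤ ker c₂) :
    (c₂ + τ₂) ∘ₗ (c₃ + τ₃) = c₂ ∘ₗ c₃ := by
  rw [comp_add, add_comp, add_comp, range_le_ker_iff.mp h₃,
    range_le_ker_iff.mp (le_sup_left.trans h₂), range_le_ker_iff.mp (le_sup_right.trans h₂)]
  simp

theorem IsCompl.exists_range_le_ker_inf_right [FiniteDimensional F V] {W Z : Submodule F V}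
    (hWZ : IsCompl W Z) {h : ℕ} (hh : 2 * h ≤ finrank F Z) :
    ∃ ρ : V →ₗ[F] V, range ρ ≤ ker ρ ⊓ Z ∧ W ≤ ker ρ ∧ finrank F (range ρ) = h := by
  obtain ⟨E, hEZ, hE⟩ := Z.exists_le_finrank_eq_s11 (a := h) (by omega)
  obtain ⟨E', hEE', hZ, hE'⟩ := exists_disjoint_sup_eq_of_le hEZ
  obtain ⟨T, hTE', hT⟩ := E'.exists_le_finrank_eq_s11 (a := h) (by omega)
  have hcompl : IsCompl E (E' ⊔ W) := hEE'.isCompl_sup_right_of_isCompl_sup_left (hZ ▸ hWZ.symm)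
  let ψ : E ≃ₗ[F] T := LinearEquiv.ofFinrankEq E T (hE.trans hT.symm)
  set ρ := ofIsCompl hcompl (T.subtype ∘ₗ ψ.toLinearMap) 0
  have hrange : range ρ = T := by simp [ρ, range_ofIsCompl, range_comp]
  have hker : E' ⊔ W ≤ ker ρ := fun x hx => ofIsCompl_apply_right hcompl ⟨x, hx⟩
  refine ⟨ρ, hrange ▸ le_inf (hTE'.trans (le_sup_left.trans hker)) (hTE'.trans (hZ ▸ le_sup_right)),
    le_sup_right.trans hker, hrange ▸ hT⟩

theorem LinearMap.exists_range_le_range_and_ker_le_ker {W : Type*} [AddCommGroup W] [Module F W]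
    (ρ : V →ₗ[F] W) {a : ℕ} (ha : a ≤ finrank F (range ρ)) :
    ∃ τ : V →ₗ[F] W, range τ ≤ range ρ ∧ ker ρ ≤ ker τ ∧ finrank F (range τ) = a := by
  obtain ⟨T, hT, rfl⟩ := (range ρ).exists_le_finrank_eq_s11 ha
  obtain ⟨T', hTT'⟩ := T.exists_isCompl
  have hrange : range (T.projection T' hTT' ∘ₗ ρ) = T := by
    refine le_antisymm ((range_comp_le_range _ _).trans (range_projection hTT').le) fun t ht => ?_
    obtain ⟨v, rfl⟩ := hT ht
    exact ⟨v, projection_apply_of_mem_left hTT' ht⟩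
  exact ⟨_, hrange ▸ hT, ker_le_ker_comp _ _, by rw [hrange]⟩

theorem IsCompl.exists_pair_range_le_ker_inf_right [FiniteDimensional F V]
    {W Z : Submodule F V} (hWZ : IsCompl W Z) {a b : ℕ}
    (ha : 2 * a ≤ finrank F Z) (hb : 2 * b ≤ finrank F Z) :
    ∃ τ τ' : V →ₗ[F] V, range τ ⊔ range τ' ≤ Z ⊓ (ker τ ⊓ ker τ') ∧ W ≤ ker τ ⊓ ker τ' ∧
      finrank F (range τ) = a ∧ finrank F (range τ') = b := by
  obtain ⟨ρ, hρ, hWρ, hρrank⟩ := hWZ.exists_range_le_ker_inf_right (h := max a b) (by omega)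
  obtain ⟨τ, hτ, hkτ, rfl⟩ := ρ.exists_range_le_range_and_ker_le_ker (a := a) (by omega)
  obtain ⟨τ', hτ', hkτ', rfl⟩ := ρ.exists_range_le_range_and_ker_le_ker (a := b) (by omega)
  exact ⟨τ, τ', by order, by order, rfl, rfl⟩

theorem IsCompl.ofIsCompl_comp_ofIsCompl_eq_projection {C N N₁ D : Submodule F V}
    (hCN : IsCompl C N) (hN₁D : IsCompl N₁ D) (e : C ≃ₗ[F] N₁) :
    ofIsCompl hN₁D (C.subtype ∘ₗ e.symm.toLinearMap) 0 ∘ₗ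
      ofIsCompl hCN (N₁.subtype ∘ₗ e.toLinearMap) 0 = C.projection N hCN := by
  refine ext_on_codisjoint hCN.codisjoint (fun x hx => ?_) (fun x hx => ?_)
  · rw [comp_apply, ofIsCompl_apply_left hCN ⟨x, hx⟩ (φ := N₁.subtype ∘ₗ e.toLinearMap),
      projection_apply_of_mem_left hCN hx]
    exact (ofIsCompl_apply_left hN₁D (e ⟨x, hx⟩)).trans (by simp)
  · rw [comp_apply, ofIsCompl_apply_right hCN ⟨x, hx⟩, LinearMap.zero_apply, map_zero,
      (projection_apply_eq_zero_iff hCN).mpr hx]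

theorem IsCompl.exists_range_le_ker_comp_eq_projection [FiniteDimensional F V]
    {C N : Submodule F V} (hCN : IsCompl C N) {r₂ r₃ : ℕ}
    (h₂ : finrank F C ≤ r₂) (h₂' : 2 * r₂ ≤ finrank F V)
    (h₃ : finrank F C ≤ r₃) (h₃' : 2 * r₃ ≤ finrank F V) :
    ∃ σ₂ σ₃ : V →ₗ[F] V, range σ₂ ≤ ker σ₂ ∧ range σ₃ ≤ ker σ₃ ∧
      finrank F (range σ₂) = r₂ ∧ finrank F (range σ₃) = r₃ ∧
      σ₂ ∘ₗ σ₃ = C.projection N hCN := by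
  have hdim := finrank_add_eq_of_isCompl hCN
  obtain ⟨N₁, hN₁N, hN₁⟩ := N.exists_le_finrank_eq_s11 (a := finrank F C) (by omega)
  obtain ⟨N', hN₁N', hN, hN'⟩ := exists_disjoint_sup_eq_of_le hN₁N
  have hN'N : N' ≤ N := hN ▸ le_sup_right
  have hN₁compl : IsCompl N₁ (N' ⊔ C) :=
    hN₁N'.isCompl_sup_right_of_isCompl_sup_left (hN ▸ hCN.symm)
  have hN'compl : IsCompl N' (N₁ ⊔ C) :=
    hN₁N'.symm.isCompl_sup_right_of_isCompl_sup_left (sup_comm N₁ N' ▸ hN ▸ hCN.symm)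
  let ψ : C ≃ₗ[F] N₁ := LinearEquiv.ofFinrankEq C N₁ hN₁.symm
  set c₃ := ofIsCompl hCN (N₁.subtype ∘ₗ ψ.toLinearMap) 0
  set c₂ := ofIsCompl hN₁compl (C.subtype ∘ₗ ψ.symm.toLinearMap) 0
  have hc₃ : range c₃ = N₁ := by simp [c₃, range_ofIsCompl, range_comp]
  have hc₂ : range c₂ = C := by simp [c₂, range_ofIsCompl, range_comp]
  have hkc₃ : N ≤ ker c₃ := fun x hx => ofIsCompl_apply_right hCN ⟨x, hx⟩
  have hkc₂ : N' ⊔ C ≤ ker c₂ := fun x hx => ofIsCompl_apply_right hN₁compl ⟨x, hx⟩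
  obtain ⟨τ₂, τ₃, hτ, hWτ, hτ₂, hτ₃⟩ := hN'compl.symm.exists_pair_range_le_ker_inf_right
    (a := r₂ - finrank F C) (b := r₃ - finrank F C) (by omega) (by omega)
  refine ⟨c₂ + τ₂, c₃ + τ₃, range_add_le_ker_add (by order), range_add_le_ker_add (by order),
    ?_, ?_, ?_⟩
  · rw [finrank_range_add (hN₁compl.codisjoint.symm.mono hkc₂ (by order))
      (hCN.disjoint.mono hc₂.le (by order)), hc₂, hτ₂]
    omega
  · rw [finrank_range_add (hCN.codisjoint.symm.mono hkc₃ (by order))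
      (hN₁N'.mono hc₃.le (by order)), hc₃, hτ₃, hN₁]
    omega
  · rw [add_comp_add_eq_comp (by order) (by order)]
    exact hCN.ofIsCompl_comp_ofIsCompl_eq_projection hN₁compl ψ

theorem IsCompl.exists_range_le_ker_eqOn [FiniteDimensional F V] {f : V →ₗ[F] V}
    {C : Submodule F V} (hC : IsCompl C (ker f)) (hCf : Disjoint C (range f)) {r : ℕ}
    (hr : finrank F (range f) ≤ r) (hr' : 2 * r ≤ finrank F V) :
    ∃ σ : V →ₗ[F] V, range σ ≤ ker σ ∧ finrank F (range σ) = r ∧ Set.EqOn σ f C := by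
  have hCdim := finrank_add_eq_of_isCompl hC
  have hk := finrank_range_add_finrank_ker f
  obtain ⟨D, hfD, hDC⟩ := hCf.symm.exists_isCompl
  have hDdim := finrank_add_eq_of_isCompl hDC
  obtain ⟨Z, hfZ, hD, hZ⟩ := exists_disjoint_sup_eq_of_le hfD
  have hZcompl : IsCompl Z (range f ⊔ C) :=
    hfZ.symm.isCompl_sup_right_of_isCompl_sup_left (sup_comm (range f) Z ▸ hD ▸ hDC)
  obtain ⟨ρ, hρ, hkρ, hρrank⟩ :=
    hZcompl.symm.exists_range_le_ker_inf_right (h := r - finrank F (range f)) (by omega)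
  set c := ofIsCompl hDC.symm (f.domRestrict C) 0
  have hc : range c = range (f.domRestrict C) := by simp [c, range_ofIsCompl]
  have hkc : D ≤ ker c := fun x hx => ofIsCompl_apply_right hDC.symm ⟨x, hx⟩
  have hcf : range c ≤ range f := hc ▸ range_domRestrict_le_range f C
  have hcrank : finrank F (range c) = finrank F C :=
    hc ▸ finrank_range_of_inj (injective_domRestrict_iff.2 hC.disjoint)
  refine ⟨c + ρ, range_add_le_ker_add (by order), ?_, fun x hx => ?_⟩
  · rw [finrank_range_add (hDC.codisjoint.mono hkc (by order)) (hfZ.mono hcf (by order)),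
      hcrank, hρrank]
    omega
  · rw [LinearMap.add_apply, mem_ker.mp (hkρ (mem_sup_right hx)), add_zero]
    exact ofIsCompl_apply_left hDC.symm ⟨x, hx⟩

theorem LinearMap.exists_range_le_ker_comp_comp_eq [FiniteDimensional F V] (f : V →ₗ[F] V)
    {r₁ r₂ r₃ : ℕ} (h₁ : finrank F (range f) ≤ r₁) (h₁' : 2 * r₁ ≤ finrank F V)
    (h₂ : finrank F (range f) ≤ r₂) (h₂' : 2 * r₂ ≤ finrank F V)
    (h₃ : finrank F (range f) ≤ r₃) (h₃' : 2 * r₃ ≤ finrank F V) :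
    ∃ σ₁ σ₂ σ₃ : V →ₗ[F] V, range σ₁ ≤ ker σ₁ ∧ range σ₂ ≤ ker σ₂ ∧ range σ₃ ≤ ker σ₃ ∧
      f = σ₁ ∘ₗ σ₂ ∘ₗ σ₃ ∧
      finrank F (range σ₁) = r₁ ∧ finrank F (range σ₂) = r₂ ∧ finrank F (range σ₃) = r₃ := by
  have hk := finrank_range_add_finrank_ker f
  obtain ⟨C, hCk, hCker, hCf⟩ := exists_finrank_eq_disjoint_disjoint (ker f) (range f)
    (d := finrank F (range f)) (by omega) (by omega)
  have hC : IsCompl C (ker f) := (isCompl_iff_disjoint _ _ (by omega)).mpr hCker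
  obtain ⟨σ₁, hσ₁, hσ₁r, hσ₁f⟩ := hC.exists_range_le_ker_eqOn hCf h₁ h₁'
  obtain ⟨σ₂, σ₃, hσ₂, hσ₃, hσ₂r, hσ₃r, hσ₂₃⟩ :=
    hC.exists_range_le_ker_comp_eq_projection (hCk ▸ h₂) h₂' (hCk ▸ h₃) h₃'
  refine ⟨σ₁, σ₂, σ₃, hσ₁, hσ₂, hσ₃, ?_, hσ₁r, hσ₂r, hσ₃r⟩
  ext x
  rw [comp_apply, hσ₂₃, hσ₁f (projection_apply_mem hC x), ← sub_eq_zero, ← map_sub]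
  exact sub_projection_mem hC x

theorem LinearMap.two_mul_finrank_range_le_of_range_le_ker [FiniteDimensional F V]
    {σ : V →ₗ[F] V} (h : range σ ≤ ker σ) : 2 * finrank F (range σ) ≤ finrank F V := by
  have := finrank_range_add_finrank_ker σ
  have := finrank_mono h
  omega

theorem LinearMap.eq_zero_of_range_eq_ker_of_eq_comp {g h k : V →ₗ[F] V}
    (hg : range g = ker g) (hh : range h ≤ ker h) (hk : range k ≤ ker k) (hghk : g = h ∘ₗ k) :
    g = 0 := by
  subst hghk
  refine range_le_ker_iff.mp ?_
  calc range k ≤ ker k := hk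
    _ ≤ ker (h ∘ₗ k) := ker_le_ker_comp k h
    _ = range (h ∘ₗ k) := hg.symm
    _ ≤ range h := range_comp_le_range k h
    _ ≤ ker h := hh

end

namespace Matrix

variable {F : Type*} [Field F] {m : ℕ}

theorem mulVecLin_toMatrix' (f : (Fin m → F) →ₗ[F] Fin m → F) :
    (LinearMap.toMatrix' f).mulVecLin = f := by
  rw [← toLin'_apply', toLin'_toMatrix']

theorem mul_self_eq_zero_iff_range_le_ker {S : Matrix (Fin m) (Fin m) F} :
    S * S = 0 ↔ range S.mulVecLin ≤ ker S.mulVecLin := by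
  rw [range_le_ker_iff, ← mulVecLin_mul, ← toLin'_apply', LinearEquiv.map_eq_zero_iff]

theorem rank_toMatrix' (f : (Fin m → F) →ₗ[F] Fin m → F) :
    (LinearMap.toMatrix' f).rank = finrank F (range f) := by
  rw [rank, mulVecLin_toMatrix']

theorem two_mul_rank_le_of_range_le_ker {S : Matrix (Fin m) (Fin m) F}
    (h : range S.mulVecLin ≤ ker S.mulVecLin) : 2 * S.rank ≤ m := by
  have := two_mul_finrank_range_le_of_range_le_ker h
  rwa [finrank_fin_fun] at this

theorem exists_mul_self_eq_zero_mul_mul_eq (G : Matrix (Fin m) (Fin m) F) {r₁ r₂ r₃ : ℕ}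
    (h₁ : G.rank ≤ r₁) (h₁' : 2 * r₁ ≤ m) (h₂ : G.rank ≤ r₂) (h₂' : 2 * r₂ ≤ m)
    (h₃ : G.rank ≤ r₃) (h₃' : 2 * r₃ ≤ m) :
    ∃ S₁ S₂ S₃ : Matrix (Fin m) (Fin m) F,
      S₁ * S₁ = 0 ∧ S₂ * S₂ = 0 ∧ S₃ * S₃ = 0 ∧ G = S₁ * S₂ * S₃ ∧
      S₁.rank = r₁ ∧ S₂.rank = r₂ ∧ S₃.rank = r₃ := by
  rw [← finrank_fin_fun F (n := m)] at h₁' h₂' h₃'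
  obtain ⟨σ₁, σ₂, σ₃, hσ₁, hσ₂, hσ₃, hG, rfl, rfl, rfl⟩ :=
    G.mulVecLin.exists_range_le_ker_comp_comp_eq h₁ h₁' h₂ h₂' h₃ h₃'
  refine ⟨toMatrix' σ₁, toMatrix' σ₂, toMatrix' σ₃, ?_, ?_, ?_, ?_,
    rank_toMatrix' σ₁, rank_toMatrix' σ₂, rank_toMatrix' σ₃⟩
  · rwa [mul_self_eq_zero_iff_range_le_ker, mulVecLin_toMatrix']
  · rwa [mul_self_eq_zero_iff_range_le_ker, mulVecLin_toMatrix']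
  · rwa [mul_self_eq_zero_iff_range_le_ker, mulVecLin_toMatrix']
  · refine toLin'.injective ?_
    rw [toLin'_apply', hG, toLin'_mul, toLin'_mul, toLin'_toMatrix', toLin'_toMatrix',
      toLin'_toMatrix', comp_assoc]

theorem eq_zero_of_range_eq_ker_of_eq_mul {G H K : Matrix (Fin m) (Fin m) F}
    (hG : range G.mulVecLin = ker G.mulVecLin) (hH : H * H = 0) (hK : K * K = 0)
    (hGHK : G = H * K) : G = 0 := by
  refine toLin'.injective ?_
  rw [toLin'_apply', map_zero]
  exact eq_zero_of_range_eq_ker_of_eq_comp hG (mul_self_eq_zero_iff_range_le_ker.mp hH)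
    (mul_self_eq_zero_iff_range_le_ker.mp hK) (by rw [hGHK, mulVecLin_mul])

end Matrix

/-- Botha, Theorem 5. Let `F` be a field and `G ∈ M_m(F)`. Then `G` is a
product of finitely many (one or more) square-zero matrices iff `2 rank G ≤ m`; in that case
three factors suffice, with arbitrary admissible ranks. The bound three is sharp: any nonzero
`G` with `R(G) = N(G)` satisfies `2 rank G ≤ m` but is not a product of two square-zero
matrices. -/
theorem stmt11 {m : ℕ} {F : Type*} [Field F] (G : Matrix (Fin m) (Fin m) F) :
    ((∃ L : List (Matrix (Fin m) (Fin m) F),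
        L ≠ [] ∧ (∀ S ∈ L, S * S = 0) ∧ G = L.prod) ↔ 2 * G.rank ≤ m) ∧
    (2 * G.rank ≤ m → ∀ r₁ r₂ r₃ : ℕ,
      G.rank ≤ r₁ → 2 * r₁ ≤ m → G.rank ≤ r₂ → 2 * r₂ ≤ m → G.rank ≤ r₃ → 2 * r₃ ≤ m →
      ∃ S₁ S₂ S₃ : Matrix (Fin m) (Fin m) F,
        S₁ * S₁ = 0 ∧ S₂ * S₂ = 0 ∧ S₃ * S₃ = 0 ∧ G = S₁ * S₂ * S₃ ∧
        S₁.rank = r₁ ∧ S₂.rank = r₂ ∧ S₃.rank = r₃) ∧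
    (∀ G' : Matrix (Fin m) (Fin m) F, G' ≠ 0 →
      LinearMap.range G'.mulVecLin = LinearMap.ker G'.mulVecLin →
      2 * G'.rank ≤ m ∧
      ¬∃ H K : Matrix (Fin m) (Fin m) F, H * H = 0 ∧ K * K = 0 ∧ G' = H * K) := by
  refine ⟨⟨?_, fun hG => ?_⟩,
    fun _ _ _ _ h₁ h₁' h₂ h₂' h₃ h₃' =>
      Matrix.exists_mul_self_eq_zero_mul_mul_eq G h₁ h₁' h₂ h₂' h₃ h₃',
    fun G' hG' hRN => ⟨Matrix.two_mul_rank_le_of_range_le_ker hRN.le, ?_⟩⟩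
  · rintro ⟨_ | ⟨S, L⟩, hL, hsq, rfl⟩
    · exact absurd rfl hL
    · exact (Nat.mul_le_mul_left 2 (Matrix.rank_mul_le_left S L.prod)).trans
        (Matrix.two_mul_rank_le_of_range_le_ker
          (Matrix.mul_self_eq_zero_iff_range_le_ker.mp (hsq S List.mem_cons_self)))
  · obtain ⟨S₁, S₂, S₃, h₁, h₂, h₃, hG, -⟩ :=
      Matrix.exists_mul_self_eq_zero_mul_mul_eq G le_rfl hG le_rfl hG le_rfl hG
    exact ⟨[S₁, S₂, S₃], List.cons_ne_nil _ _, by simp [h₁, h₂, h₃], by simp [hG, mul_assoc]⟩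
  · rintro ⟨H, K, hH, hK, hGHK⟩
    exact hG' (Matrix.eq_zero_of_range_eq_ker_of_eq_mul hRN hH hK hGHK)
end

section
/- Let F be a field and let A ∈ M_n(F) be invertible. If A = S + T where S, T ∈ M_n(F) are square-zero, then n is even, say n = 2k, the ranks and nullities satisfy rank(S) = rank(T) = nullity(S) = nullity(T) = k, and there exists an invertible matrix T₁ ∈ M_k(F) such that A is similar to the 2×2 block matrix with blocks [[0, T₁], [I_k, 0]] (zero blocks on the diagonal, T₁ in the upper-right block and the identity I_k in the lower-left block). -/
/-!
Since `S² = 0` we have `range S ≤ ker S`, so `dim ker S ≥ n / 2`, and likewise for `T`; since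
`S + T` is injective, `ker S ⊓ ker T = ⊥`. Hence both kernels have dimension exactly `k = n / 2`
and are complementary. On `ker S` the map `A = S + T` acts as `T`, so it maps `ker S` into `ker T`,
and symmetrically. For a basis `u` of `ker S`, the vectors `u, A u` form a basis of the whole space
in which `A` sends `u` to `A u` and `A u` to `A² u ∈ ker S`: this is the block form, with `T₁` the
matrix of `A²` on `ker S`.
-/

open Module Matrix Submodule LinearMap

theorem LinearMap.toMatrix_basis_reindex {R M ι ι' : Type*} [CommRing R] [AddCommGroup M]
    [Module R M] [Fintype ι] [DecidableEq ι] [Fintype ι'] [DecidableEq ι']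
    (b : Basis ι R M) (e : ι ≃ ι') (f : M →ₗ[R] M) :
    toMatrix (b.reindex e) (b.reindex e) f = reindex e e (toMatrix b b f) := by
  ext i j
  simp [toMatrix_apply, Basis.repr_reindex, Finsupp.mapDomain_equiv_apply]

theorem Matrix.exists_units_inv_mul_mul_eq_toMatrix {K ι : Type*} [Field K] [Fintype ι]
    [DecidableEq ι] (A : Matrix ι ι K) (b : Basis ι K (ι → K)) :
    ∃ P : (Matrix ι ι K)ˣ, (↑P⁻¹ : Matrix ι ι K) * A * (P : Matrix ι ι K) =
      toMatrix b b A.mulVecLin := by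
  let := (Pi.basisFun K ι).invertibleToMatrix b
  refine ⟨unitOfInvertible ((Pi.basisFun K ι).toMatrix b), ?_⟩
  rw [← basis_toMatrix_mul_linearMap_toMatrix_mul_basis_toMatrix b (Pi.basisFun K ι) b
    (Pi.basisFun K ι), toMatrix_eq_toMatrix', ← Matrix.toLin'_apply', toMatrix'_toLin']
  rfl

namespace LinearMap

section Ring

variable {R M M₂ : Type*} [Ring R] [AddCommGroup M] [Module R M] [AddCommGroup M₂] [Module R M₂]

theorem disjoint_ker_of_injective_add {s t : M →ₗ[R] M₂} (h : Function.Injective (s + t)) :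
    Disjoint (ker s) (ker t) := by
  refine Submodule.disjoint_def.2 fun x hs ht ↦ h ?_
  rw [mem_ker] at hs ht
  simp [hs, ht]

theorem mapsTo_ker_add_of_comp_self_eq_zero {s t : M →ₗ[R] M} (ht : t ∘ₗ t = 0) :
    Set.MapsTo (s + t) (ker s) (ker t) := by
  intro x hx
  rw [SetLike.mem_coe, mem_ker] at hx ⊢
  simpa [hx] using congr($ht x)

end Ring

section Field

variable {K V : Type*} [Field K] [AddCommGroup V] [Module K V] [FiniteDimensional K V]

theorem two_mul_finrank_ker_of_comp_self_eq_zero {s t : V →ₗ[K] V} (hs : s ∘ₗ s = 0)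
    (ht : t ∘ₗ t = 0) (h : Function.Injective (s + t)) :
    2 * finrank K (ker s) = finrank K V := by
  have hs_range := Submodule.finrank_mono (range_le_ker_iff.2 hs)
  have ht_range := Submodule.finrank_mono (range_le_ker_iff.2 ht)
  have := finrank_range_add_finrank_ker s
  have := finrank_range_add_finrank_ker t
  have := Submodule.finrank_add_finrank_le_of_disjoint (disjoint_ker_of_injective_add h)
  omega

theorem isCompl_ker_of_comp_self_eq_zero {s t : V →ₗ[K] V} (hs : s ∘ₗ s = 0)
    (ht : t ∘ₗ t = 0) (h : Function.Injective (s + t)) :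
    IsCompl (ker s) (ker t) := by
  have := two_mul_finrank_ker_of_comp_self_eq_zero hs ht h
  have := two_mul_finrank_ker_of_comp_self_eq_zero ht hs (add_comm s t ▸ h)
  exact (isCompl_iff_disjoint _ _ (by omega)).2 (disjoint_ker_of_injective_add h)

theorem exists_basis_toMatrix_eq_fromBlocks {f : V →ₗ[K] V} (hf : Function.Injective f)
    {U W : Submodule K V} (hUW : IsCompl U W) (hU : Set.MapsTo f U W) (hW : Set.MapsTo f W U)
    {k : ℕ} (hk : finrank K U = k) :
    ∃ (b : Basis (Fin k ⊕ Fin k) K V) (T₁ : Matrix (Fin k) (Fin k) K),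
      IsUnit T₁ ∧ toMatrix b b f = fromBlocks 0 T₁ 1 0 := by
  set g := f.restrict hU
  set g' := f.restrict hW
  have hg : Function.Injective g := fun x y hxy ↦ Subtype.ext (hf congr(($hxy : V)))
  have hg' : Function.Injective g' := fun x y hxy ↦ Subtype.ext (hf congr(($hxy : V)))
  have hUW_dim : finrank K U = finrank K W :=
    (finrank_le_finrank_of_injective hg).antisymm (finrank_le_finrank_of_injective hg')
  let bU : Basis (Fin k) K U := finBasisOfFinrankEq K U hk
  let b : Basis (Fin k ⊕ Fin k) K V :=
    (bU.prod (bU.map (g.linearEquivOfInjective hg hUW_dim))).map (prodEquivOfIsCompl U W hUW)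
  have hb_inl (i : Fin k) : b (.inl i) = bU i := by simp [b]
  have hb_inr (i : Fin k) : b (.inr i) = f (bU i) := by simp [b]; rfl
  set T₁ := toMatrix bU bU (g' ∘ₗ g)
  refine ⟨b, T₁, ?_, ?_⟩
  · rw [isUnit_toMatrix_iff, isUnit_iff_ker_eq_bot, ker_eq_bot]
    exact hg'.comp hg
  · rw [← toMatrix_toLin b b (fromBlocks 0 T₁ 1 0)]
    congr 1
    refine b.ext fun j ↦ ?_
    rw [toLin_self, Fintype.sum_sum_type]
    cases j with
    | inl i => simp [hb_inl, hb_inr, Matrix.one_apply]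
    | inr i =>
      have hT₁ : g' (g (bU i)) = ∑ j, T₁ j i • bU j := by
        rw [← toLin_self bU bU T₁, toLin_toMatrix]
        rfl
      have hf_sq : f (f (bU i)) = g' (g (bU i)) := rfl
      simp [hb_inl, hb_inr, hf_sq, hT₁]

end Field

end LinearMap

/-- Let `F` be a field and `A ∈ M_n(F)` invertible with `A = S + T` where
`S, T` are square-zero. Then `n = 2k` is even, `rank S = rank T = nullity S = nullity T = k`,
and `A` is similar to the block matrix `[[0, T₁], [I_k, 0]]` for some invertible
`T₁ ∈ M_k(F)`. -/
theorem stmt13 {n : ℕ} {F : Type*} [Field F]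
    (A S T : Matrix (Fin n) (Fin n) F)
    (hA : IsUnit A) (hS : S * S = 0) (hT : T * T = 0) (hsum : A = S + T) :
    ∃ k : ℕ, n = 2 * k ∧
      S.rank = k ∧ T.rank = k ∧
      Module.finrank F (LinearMap.ker S.mulVecLin) = k ∧
      Module.finrank F (LinearMap.ker T.mulVecLin) = k ∧
      ∃ (hk : k + k = n) (T₁ : Matrix (Fin k) (Fin k) F)
        (P : (Matrix (Fin n) (Fin n) F)ˣ),
        IsUnit T₁ ∧
        (P⁻¹ : (Matrix (Fin n) (Fin n) F)ˣ) * A * (P : Matrix (Fin n) (Fin n) F) =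
          Matrix.reindex (finSumFinEquiv.trans (finCongr hk))
            (finSumFinEquiv.trans (finCongr hk))
            (Matrix.fromBlocks (0 : Matrix (Fin k) (Fin k) F) T₁ (1 : Matrix (Fin k) (Fin k) F) 0) := by
  set s := S.mulVecLin
  set t := T.mulVecLin
  have hs : s ∘ₗ s = 0 := by rw [← mulVecLin_mul, hS, mulVecLin_zero]
  have ht : t ∘ₗ t = 0 := by rw [← mulVecLin_mul, hT, mulVecLin_zero]
  have hst : Function.Injective (s + t) := by
    rw [← mulVecLin_add, ← hsum]
    exact mulVec_injective_iff_isUnit.2 hA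
  have hts : Function.Injective (t + s) := add_comm s t ▸ hst
  have hks := two_mul_finrank_ker_of_comp_self_eq_zero hs ht hst
  have hkt := two_mul_finrank_ker_of_comp_self_eq_zero ht hs hts
  have hrs : S.rank + finrank F (ker s) = n := by
    rw [Matrix.rank, finrank_range_add_finrank_ker, finrank_fin_fun]
  have hrt : T.rank + finrank F (ker t) = n := by
    rw [Matrix.rank, finrank_range_add_finrank_ker, finrank_fin_fun]
  rw [finrank_fin_fun] at hks hkt
  set k := finrank F (ker s)
  have hk : k + k = n := by omega
  obtain ⟨b, T₁, hT₁, hb⟩ := exists_basis_toMatrix_eq_fromBlocks hst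
    (isCompl_ker_of_comp_self_eq_zero hs ht hst) (mapsTo_ker_add_of_comp_self_eq_zero ht)
    (add_comm t s ▸ mapsTo_ker_add_of_comp_self_eq_zero hs) rfl
  obtain ⟨P, hP⟩ := A.exists_units_inv_mul_mul_eq_toMatrix
    (b.reindex (finSumFinEquiv.trans (finCongr hk)))
  refine ⟨k, by omega, by omega, by omega, rfl, by omega, hk, T₁, P, hT₁, ?_⟩
  rw [hP, toMatrix_basis_reindex, hsum, mulVecLin_add, hb]
end

section
/- Let F be a field whose characteristic is not 2, and let A ∈ M_n(F). Then A is a sum of two square-zero matrices if and only if there exists an involution V ∈ M_n(F) (i.e., V² = I_n) such that AV = −VA. -/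
/-!
If `A = S + T` with `S² = T² = 0`, then `D = S - T` anticommutes with `A` and `D² = -A²`, so for
invertible `A` the matrix `A⁻¹ D` is an involution anticommuting with `A`. In general `S` and `T`
commute with `A² = ST + TS`, so the Fitting decomposition of `A²` splits the space into a part on
which `A` is invertible and a part on which `A` is nilpotent. A nilpotent map anticommutes with the
involution acting by `(-1)^i` on the `i`-th vector of each Jordan chain; the chains are obtained by
repeatedly splitting off a Krylov subspace with an invariant complement.
Conversely, if `V² = 1` and `AV = -VA`, then `A = ½(A + AV) + ½(A - AV)` with both summands
square-zero.
-/

open Module Set Submodule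

def HasAnticommutingInvolution {R : Type*} [Ring R] (a : R) : Prop :=
  ∃ v : R, v * v = 1 ∧ a * v = -(v * a)

namespace HasAnticommutingInvolution

variable {R S : Type*} [Ring R] [Ring S] {a : R}

lemma zero : HasAnticommutingInvolution (0 : R) := ⟨1, mul_one 1, by simp⟩

lemma map {G : Type*} [FunLike G R S] [RingHomClass G R S] (h : HasAnticommutingInvolution a)
    (φ : G) : HasAnticommutingInvolution (φ a) := by
  obtain ⟨v, hv, hav⟩ := h
  exact ⟨φ v, by rw [← map_mul, hv, map_one], by rw [← map_mul, hav, map_neg, map_mul]⟩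

lemma prod {b : S} (ha : HasAnticommutingInvolution a) (hb : HasAnticommutingInvolution b) :
    HasAnticommutingInvolution (a, b) := by
  obtain ⟨v, hv, hav⟩ := ha
  obtain ⟨w, hw, hbw⟩ := hb
  exact ⟨(v, w), Prod.ext hv hw, Prod.ext hav hbw⟩

-- `a⁻¹ (s - t)` works: `s - t` anticommutes with `a = s + t` and squares to `-a²`.
theorem of_isUnit_of_eq_add {s t : R} (ha : IsUnit a) (hs : s * s = 0) (ht : t * t = 0)
    (hst : a = s + t) : HasAnticommutingInvolution a := by
  obtain ⟨u, rfl⟩ := ha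
  set d := s - t with hd
  have had : ↑u * d = -(d * u) := by
    refine eq_neg_of_add_eq_zero_left ?_
    calc ↑u * d + d * u = (s * s + s * s) - (t * t + t * t) := by rw [hst, hd]; noncomm_ring
      _ = 0 := by simp [hs, ht]
  have hdd : d * d = -(↑u * ↑u) := by
    refine eq_neg_of_add_eq_zero_left ?_
    calc d * d + ↑u * ↑u = (s * s + s * s) + (t * t + t * t) := by rw [hst, hd]; noncomm_ring
      _ = 0 := by simp [hs, ht]
  have hdu : d * ↑u⁻¹ = -(↑u⁻¹ * d) := by
    calc d * ↑u⁻¹ = ↑u⁻¹ * (↑u * d) * ↑u⁻¹ := by simp [← mul_assoc]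
      _ = -(↑u⁻¹ * d) := by rw [had]; simp [mul_assoc]
  refine ⟨↑u⁻¹ * d, ?_, ?_⟩
  · calc ↑u⁻¹ * d * (↑u⁻¹ * d) = -(↑u⁻¹ * ↑u⁻¹ * (d * d)) := by
          rw [mul_assoc, ← mul_assoc d, hdu]; noncomm_ring
      _ = 1 := by rw [hdd]; simp [mul_assoc, ← mul_assoc (↑u⁻¹ : R) (↑u)]
  · calc ↑u * (↑u⁻¹ * d) = d := by simp [← mul_assoc]
      _ = -(↑u⁻¹ * d * ↑u) := by rw [mul_assoc, ← neg_neg (d * ↑u), ← had]; simp [← mul_assoc]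

theorem exists_eq_add_of_mul_self_eq_zero {K A : Type*} [Field K] [Ring A] [Algebra K A]
    (h2 : (2 : K) ≠ 0) {a : A} (h : HasAnticommutingInvolution a) :
    ∃ s t : A, s * s = 0 ∧ t * t = 0 ∧ a = s + t := by
  obtain ⟨v, hv, hav⟩ := h
  have hsum : a * v + v * a = 0 := by rw [hav, neg_add_cancel]
  refine ⟨(2⁻¹ : K) • (a + a * v), (2⁻¹ : K) • (a - a * v), ?_, ?_, ?_⟩
  · rw [smul_mul_smul_comm]
    calc (2⁻¹ * 2⁻¹ : K) • ((a + a * v) * (a + a * v))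
        = (2⁻¹ * 2⁻¹ : K) • (a * a * (1 - v * v) + a * (a * v + v * a) +
            a * (a * v + v * a) * v) := by congr 1; noncomm_ring
      _ = 0 := by simp [hv, hsum]
  · rw [smul_mul_smul_comm]
    calc (2⁻¹ * 2⁻¹ : K) • ((a - a * v) * (a - a * v))
        = (2⁻¹ * 2⁻¹ : K) • (a * a * (1 - v * v) - a * (a * v + v * a) +
            a * (a * v + v * a) * v) := by congr 1; noncomm_ring
      _ = 0 := by simp [hv, hsum]
  · rw [← smul_add, add_add_sub_cancel, ← two_smul K, smul_smul, inv_mul_cancel₀ h2, one_smul]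

end HasAnticommutingInvolution

theorem commute_mul_self_add_of_mul_self_eq_zero {R : Type*} [Ring R] {s t : R} (hs : s * s = 0)
    (ht : t * t = 0) : Commute s ((s + t) * (s + t)) :=
  calc s * ((s + t) * (s + t))
      = (s + t) * (s + t) * s + (s * s * t + s * (t * t) - t * (s * s) - t * t * s) := by
        noncomm_ring
    _ = (s + t) * (s + t) * s := by simp [hs, ht]

theorem eq_zero_of_forall_sum_mul_add_eq_zero {R : Type*} [Semiring R] [NoZeroDivisors R]
    {k : ℕ} {a : ℕ → R} (hlast : a (k - 1) ≠ 0) (hzero : ∀ m, k ≤ m → a m = 0) {c : Fin k → R}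
    (hc : ∀ i : Fin k, ∑ j, c j * a (i + j) = 0) : c = 0 := by
  funext j
  induction j using WellFoundedLT.induction with | _ j ih => ?_
  have hj := hc ⟨k - 1 - j, by omega⟩
  rw [Finset.sum_eq_single j] at hj
  · simpa [show k - 1 - j + j = k - 1 by omega, hlast] using hj
  · intro l _ hlj
    rcases lt_or_gt_of_ne hlj with hl | hl
    · rw [ih l hl, Pi.zero_apply, zero_mul]
    · rw [Fin.lt_def] at hl
      rw [hzero _ (by rw [Fin.val_mk]; omega), mul_zero]
  · simp

namespace LinearMap

variable {R M N : Type*} [Ring R] [AddCommGroup M] [Module R M] [AddCommGroup N] [Module R N]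

theorem isCompl_range_ker_of_bijective_comp {i : N →ₗ[R] M} {p : M →ₗ[R] N}
    (h : Function.Bijective (p ∘ₗ i)) : IsCompl (range i) (ker p) := by
  constructor
  · rw [Submodule.disjoint_def]
    rintro _ ⟨c, rfl⟩ hc
    rw [(injective_iff_map_eq_zero _).mp h.1 c hc, map_zero]
  · rw [codisjoint_iff, eq_top_iff]
    intro y _
    obtain ⟨c, hc⟩ := h.2 (p y)
    refine Submodule.mem_sup.mpr ⟨i c, ⟨c, rfl⟩, y - i c, ?_, add_sub_cancel _ _⟩
    rw [mem_ker, map_sub, sub_eq_zero]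
    exact hc.symm

variable {f g : Module.End R M} {p : Submodule R M}

lemma restrict_mul (hf : MapsTo f p p) (hg : MapsTo g p p) :
    f.restrict hf * g.restrict hg = (f * g).restrict (hf.comp hg) :=
  rfl

lemma restrict_add (hf : MapsTo f p p) (hg : MapsTo g p p) :
    f.restrict hf + g.restrict hg = (f + g).restrict fun _ hx ↦ p.add_mem (hf hx) (hg hx) := by
  ext; rfl

end LinearMap

section Endomorphisms

variable {R M : Type*} [Ring R] [AddCommGroup M] [Module R M] {f g : Module.End R M}

lemma Commute.mapsTo_ker (h : Commute f g) : MapsTo f (LinearMap.ker g) (LinearMap.ker g) :=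
  fun x hx ↦ by
    rw [SetLike.mem_coe, LinearMap.mem_ker] at hx ⊢
    rw [← Module.End.mul_apply, ← h.eq, Module.End.mul_apply, hx, map_zero]

lemma Commute.mapsTo_range (h : Commute f g) :
    MapsTo f (LinearMap.range g) (LinearMap.range g) := by
  rintro _ ⟨y, rfl⟩
  exact ⟨f y, (LinearMap.congr_fun h.eq y).symm⟩

theorem HasAnticommutingInvolution.of_isCompl {p q : Submodule R M} (hpq : IsCompl p q)
    (hp : MapsTo f p p) (hq : MapsTo f q q) (hfp : HasAnticommutingInvolution (f.restrict hp))
    (hfq : HasAnticommutingInvolution (f.restrict hq)) : HasAnticommutingInvolution f := by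
  let e := p.prodEquivOfIsCompl q hpq
  have hf :
      e.conjRingEquiv (LinearMap.prodMapRingHom R p q (f.restrict hp, f.restrict hq)) = f := by
    ext x
    obtain ⟨z, rfl⟩ := e.surjective x
    simp [e]; rfl
  rw [← hf]
  exact ((hfp.prod hfq).map _).map _

end Endomorphisms

namespace Module.End

variable {K V : Type*} [Field K] [AddCommGroup V] [Module K V] {f : Module.End K V} {k : ℕ}
  {x : V}

abbrev krylov (f : Module.End K V) (x : V) (k : ℕ) : Fin k → V := fun i ↦ (f ^ (i : ℕ)) x

lemma apply_mem_span_krylov (hk : f ^ k = 0) :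
    ∀ y ∈ span K (range (krylov f x k)), f y ∈ span K (range (krylov f x k)) := by
  suffices span K (range (krylov f x k)) ≤ (span K (range (krylov f x k))).comap f from
    fun y hy ↦ this hy
  refine span_le.mpr <| range_subset_iff.mpr fun i ↦ ?_
  show (f * f ^ (i : ℕ)) x ∈ span K (range (krylov f x k))
  rw [← pow_succ']
  by_cases hi : (i : ℕ) + 1 < k
  · exact subset_span ⟨⟨i + 1, hi⟩, rfl⟩
  · rw [pow_eq_zero_of_le (not_lt.mp hi) hk]
    exact zero_mem _

theorem exists_isCompl_span_krylov [FiniteDimensional K V] (hk : f ^ k = 0)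
    (hx : (f ^ (k - 1)) x ≠ 0) :
    LinearIndependent K (krylov f x k) ∧
      ∃ W : Submodule K V, MapsTo f W W ∧ IsCompl (span K (range (krylov f x k))) W := by
  -- The functionals `φ ∘ f ^ i` pair with the Krylov vectors through an anti-triangular Hankel
  -- matrix, so their common kernel is an invariant complement of the Krylov span.
  obtain ⟨φ, hφ⟩ := Module.Projective.exists_dual_eq_one K hx
  let Φ : V →ₗ[K] Fin k → K := LinearMap.pi fun i ↦ φ ∘ₗ f ^ (i : ℕ)
  let Ψ := Fintype.linearCombination K (krylov f x k)
  have hinj : Function.Injective (Φ ∘ₗ Ψ) := by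
    rw [← LinearMap.ker_eq_bot, eq_bot_iff]
    intro c hc
    refine eq_zero_of_forall_sum_mul_add_eq_zero (a := fun m ↦ φ ((f ^ m) x)) (by simp [hφ])
      (fun m hm ↦ by simp [pow_eq_zero_of_le hm hk]) fun i ↦ ?_
    have := congrFun hc i
    simpa [Φ, Ψ, Fintype.linearCombination_apply, map_sum, ← mul_apply, ← pow_add] using this
  refine ⟨linearIndependent_iff_injective_fintypeLinearCombination.mpr (hinj.of_comp (f := Φ)),
    LinearMap.ker Φ, ?_, ?_⟩
  · intro y hy
    simp only [SetLike.mem_coe, LinearMap.mem_ker, funext_iff, Φ, LinearMap.pi_apply,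
      LinearMap.comp_apply, Pi.zero_apply] at hy ⊢
    intro i
    rw [← mul_apply, ← pow_succ]
    by_cases hi : (i : ℕ) + 1 < k
    · exact hy ⟨i + 1, hi⟩
    · rw [pow_eq_zero_of_le (not_lt.mp hi) hk, LinearMap.zero_apply, map_zero]
  · rw [← Fintype.range_linearCombination]
    exact LinearMap.isCompl_range_ker_of_bijective_comp
      ⟨hinj, LinearMap.injective_iff_surjective.mp hinj⟩

theorem hasAnticommutingInvolution_restrict_span_krylov (hk : f ^ k = 0)
    (hli : LinearIndependent K (krylov f x k)) :
    HasAnticommutingInvolution (f.restrict (apply_mem_span_krylov (x := x) hk)) := by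
  let b := Basis.span hli
  have hb (i : Fin k) : (b i : V) = (f ^ (i : ℕ)) x := congrArg Subtype.val (Basis.span_apply hli i)
  have hfb : ∀ i : Fin k, f.restrict (apply_mem_span_krylov hk) (b i) =
      if h : (i : ℕ) + 1 < k then b ⟨i + 1, h⟩ else 0 := by
    intro i
    apply Subtype.ext
    rw [LinearMap.coe_restrict_apply, hb, ← mul_apply, ← pow_succ']
    split_ifs with h
    · rw [hb]
    · rw [pow_eq_zero_of_le (not_lt.mp h) hk]; rfl
  refine ⟨b.constr K fun i ↦ (-1 : K) ^ (i : ℕ) • b i, b.ext fun i ↦ ?_, b.ext fun i ↦ ?_⟩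
  · simp [smul_smul, ← mul_pow]
  · rw [mul_apply, LinearMap.neg_apply, mul_apply, b.constr_basis, map_smul, hfb]
    split_ifs with h
    · simp [pow_succ]
    · simp

theorem hasAnticommutingInvolution_of_isNilpotent [FiniteDimensional K V] (hf : IsNilpotent f) :
    HasAnticommutingInvolution f := by
  induction hn : finrank K V using Nat.strong_induction_on generalizing V with | _ n ih => ?_
  rcases eq_or_ne f 0 with rfl | hf0
  · exact .zero
  have : Nontrivial (Module.End K V) := nontrivial_of_ne f 0 hf0
  obtain ⟨x, hx⟩ := DFunLike.ne_iff.mp (pow_pred_nilpotencyClass hf)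
  obtain ⟨hli, W, hW, hZW⟩ := exists_isCompl_span_krylov (pow_nilpotencyClass hf) hx
  refine .of_isCompl hZW (apply_mem_span_krylov (pow_nilpotencyClass hf)) hW
    (hasAnticommutingInvolution_restrict_span_krylov (pow_nilpotencyClass hf) hli)
    (ih _ ?_ (isNilpotent.restrict hW hf) rfl)
  have hdim := Submodule.finrank_add_eq_of_isCompl hZW
  rw [finrank_span_eq_card hli, Fintype.card_fin] at hdim
  have := pos_nilpotencyClass_iff.mpr hf
  omega

theorem hasAnticommutingInvolution_of_eq_add [FiniteDimensional K V] {s t : Module.End K V}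
    (hs : s * s = 0) (ht : t * t = 0) (hf : f = s + t) : HasAnticommutingInvolution f := by
  -- Fitting decomposition of `f * f = s * t + t * s`, which commutes with `s` and `t`.
  obtain ⟨m, hm⟩ := Filter.eventually_atTop.mp (f * f).eventually_isCompl_ker_pow_range_pow
  set g := (f * f) ^ (m + 1) with hg
  have hfit : IsCompl (LinearMap.ker g) (LinearMap.range g) := hm (m + 1) m.le_succ
  have hsg : Commute s g := by
    rw [hg, hf]; exact (commute_mul_self_add_of_mul_self_eq_zero hs ht).pow_right _
  have htg : Commute t g := by
    rw [hg, hf, add_comm s]; exact (commute_mul_self_add_of_mul_self_eq_zero ht hs).pow_right _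
  have hfg : Commute f g := ((Commute.refl f).mul_right (Commute.refl f)).pow_right _
  refine .of_isCompl hfit hfg.mapsTo_ker hfg.mapsTo_range
    (hasAnticommutingInvolution_of_isNilpotent ⟨2 * (m + 1), ?_⟩)
    (.of_isUnit_of_eq_add (s := s.restrict hsg.mapsTo_range) (t := t.restrict htg.mapsTo_range)
      ?_ ?_ ?_ ?_)
  · ext ⟨y, hy⟩
    rw [pow_restrict (2 * (m + 1)) hfg.mapsTo_ker]
    change (f ^ (2 * (m + 1))) y = 0
    rwa [pow_mul, sq]
  · rw [LinearMap.isUnit_iff_ker_eq_bot, eq_bot_iff]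
    rintro ⟨y, hyR⟩ hy
    have hfy : f y = 0 := congrArg Subtype.val hy
    have hyK : y ∈ LinearMap.ker g := by
      rw [hg, LinearMap.mem_ker, pow_succ, mul_apply, mul_apply, hfy, map_zero, map_zero]
    exact (Submodule.mem_bot K).mpr (Subtype.ext (hfit.disjoint.le_bot ⟨hyK, hyR⟩ :))
  · rw [LinearMap.restrict_mul]; ext; simp [hs]
  · rw [LinearMap.restrict_mul]; ext; simp [ht]
  · rw [LinearMap.restrict_add]; ext; simp [hf]

end Module.End

/-- Botha/Wang–Wu. Let `F` be a field of characteristic different from 2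
and `A ∈ M_n(F)`. Then `A` is a sum of two square-zero matrices iff there is an involution
`V` (`V² = 1`) with `A * V = -(V * A)`. -/
theorem stmt15 {n : ℕ} {F : Type*} [Field F] (hF : ringChar F ≠ 2)
    (A : Matrix (Fin n) (Fin n) F) :
    (∃ S T : Matrix (Fin n) (Fin n) F, S * S = 0 ∧ T * T = 0 ∧ A = S + T) ↔
      (∃ V : Matrix (Fin n) (Fin n) F, V * V = 1 ∧ A * V = -(V * A)) := by
  refine ⟨?_, HasAnticommutingInvolution.exists_eq_add_of_mul_self_eq_zero (Ring.two_ne_zero hF)⟩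
  rintro ⟨S, T, hS, hT, rfl⟩
  let e := Matrix.toLinAlgEquiv' (R := F) (n := Fin n)
  have h := (Module.End.hasAnticommutingInvolution_of_eq_add (f := e (S + T))
    (by rw [← map_mul, hS, map_zero]) (by rw [← map_mul, hT, map_zero]) (map_add e S T)).map e.symm
  rwa [e.symm_apply_apply] at h
end

section
/- Let F be a field whose characteristic is not 2, and let A ∈ M_n(F) be a sum of three square-zero matrices. Then for every nonzero λ ∈ F, the nullity of A − λ·I_n satisfies 4·nullity(A − λ·I_n) ≤ 3n (i.e., dim ker(A − λ·I_n) ≤ 3n/4). -/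
set_option maxHeartbeats 1000000
set_option synthInstance.maxHeartbeats 200000

/-- Wang–Wu. Let `F` be a field of characteristic different from 2 and
suppose `A ∈ M_n(F)` is a sum of three square-zero matrices. Then for every nonzero `λ ∈ F`,
`4 · nullity (A - λ·I) ≤ 3n`. -/
theorem stmt18 {n : ℕ} {F : Type*} [Field F] (hF : ringChar F ≠ 2)
    (A : Matrix (Fin n) (Fin n) F)
    (h : ∃ S₁ S₂ S₃ : Matrix (Fin n) (Fin n) F,
        S₁ * S₁ = 0 ∧ S₂ * S₂ = 0 ∧ S₃ * S₃ = 0 ∧ A = S₁ + S₂ + S₃) :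
    ∀ l : F, l ≠ 0 →
      4 * Module.finrank F
          (LinearMap.ker (A - l • (1 : Matrix (Fin n) (Fin n) F)).mulVecLin) ≤ 3 * n := by
  obtain ⟨S₁, S₂, S₃, h1, h2, h3, hA⟩ := h
  intro l hl
  classical
  have h2F : (2 : F) ≠ 0 := Ring.two_ne_zero hF
  have hll : l * l ≠ 0 := mul_ne_zero hl hl
  set a := S₁.mulVecLin with hadef
  set b := S₂.mulVecLin with hbdef
  set c := S₃.mulVecLin with hcdef
  set r := (A - l • (1 : Matrix (Fin n) (Fin n) F)).mulVecLin with hrdef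
  have haa : ∀ x, a (a x) = 0 := by
    intro x
    have : (S₁ * S₁).mulVecLin x = (0 : Matrix (Fin n) (Fin n) F).mulVecLin x := by rw [h1]
    simpa only [Matrix.mulVecLin_mul, LinearMap.comp_apply, Matrix.mulVecLin_zero,
      LinearMap.zero_apply] using this
  have hbb : ∀ x, b (b x) = 0 := by
    intro x
    have : (S₂ * S₂).mulVecLin x = (0 : Matrix (Fin n) (Fin n) F).mulVecLin x := by rw [h2]
    simpa only [Matrix.mulVecLin_mul, LinearMap.comp_apply, Matrix.mulVecLin_zero,
      LinearMap.zero_apply] using this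
  have hcc : ∀ x, c (c x) = 0 := by
    intro x
    have : (S₃ * S₃).mulVecLin x = (0 : Matrix (Fin n) (Fin n) F).mulVecLin x := by rw [h3]
    simpa only [Matrix.mulVecLin_mul, LinearMap.comp_apply, Matrix.mulVecLin_zero,
      LinearMap.zero_apply] using this
  set s : (Fin n → F) →ₗ[F] (Fin n → F) := a + b with hsdef
  set u : (Fin n → F) →ₗ[F] (Fin n → F) := a - b with hudef
  have hsx : ∀ x, s x = a x + b x := fun x => rfl
  have hux : ∀ x, u x = a x - b x := fun x => rfl
  have hrx : ∀ x, r x = a x + b x + c x - l • x := by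
    intro x
    simp only [hrdef, hA, Matrix.mulVecLin_apply, Matrix.sub_mulVec, Matrix.add_mulVec,
      Matrix.smul_mulVec, Matrix.one_mulVec, hadef, hbdef, hcdef]
  set q : (Fin n → F) →ₗ[F] (Fin n → F) :=
    (s - l • LinearMap.id) ∘ₗ (s - l • LinearMap.id) with hqdef
  set q' : (Fin n → F) →ₗ[F] (Fin n → F) :=
    (s + l • LinearMap.id) ∘ₗ (s + l • LinearMap.id) with hq'def
  have hqx : ∀ x, q x = s (s x) - l • s x - l • s x + (l * l) • x := by
    intro x
    simp only [hqdef, LinearMap.comp_apply, LinearMap.sub_apply, LinearMap.smul_apply,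
      LinearMap.id_apply, map_sub, map_smul, smul_sub, smul_smul]
    module
  have hq'x : ∀ x, q' x = s (s x) + l • s x + l • s x + (l * l) • x := by
    intro x
    simp only [hq'def, LinearMap.comp_apply, LinearMap.add_apply, LinearMap.smul_apply,
      LinearMap.id_apply, map_add, map_smul, smul_add, smul_smul]
    module
  -- (I) on ker r, q x = r (s x)
  have hI : ∀ x, r x = 0 → q x = r (s x) := by
    intro x hx
    have h0 : a x + b x + c x - l • x = 0 := (hrx x).symm.trans hx
    have hcx : c x = l • x - a x - b x := by
      have key : c x - (l • x - a x - b x) = a x + b x + c x - l • x := by abel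
      rw [h0] at key
      exact sub_eq_zero.mp key
    have h0' : c (c x) = 0 := hcc x
    rw [hcx] at h0'
    have h1' : c (l • x - a x - b x) = l • c x - c (a x) - c (b x) := by
      simp only [map_sub, map_smul]
    rw [h1'] at h0'
    have hcab : c (a x) + c (b x) = l • c x := by
      have key : c (a x) + c (b x) - l • c x = -(l • c x - c (a x) - c (b x)) := by abel
      rw [h0', neg_zero] at key
      exact sub_eq_zero.mp key
    have hcs : c (s x) = l • c x := by
      have : c (s x) = c (a x) + c (b x) := by rw [hsx]; simp only [map_add]
      rw [this, hcab]
    have hrs : r (s x) = s (s x) + c (s x) - l • s x := by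
      rw [hrx (s x), hsx (s x)]
    rw [hqx x, hrs, hcs, hcx, hsx x]
    module
  -- anticommutation s ∘ u = - u ∘ s
  have hanti : ∀ x, s (u x) = - u (s x) := by
    intro x
    rw [hux, hsx, hux, hsx]
    simp only [map_sub, map_add]
    rw [haa, hbb]
    abel
  -- (III) injectivity of u on ker q
  have hinj : ∀ x, q x = 0 → u x = 0 → x = 0 := by
    intro x hqx0 hux0
    have hab : a x = b x := by
      have h' : a x - b x = 0 := (hux x).symm.trans hux0
      exact sub_eq_zero.mp h'
    have hax : a (s x) = 0 := by
      rw [hsx, map_add, ← hab, haa, add_zero]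
    have hbx : b (s x) = 0 := by
      rw [hsx, map_add, hab, hbb, zero_add]
    have hss0 : s (s x) = 0 := by
      rw [hsx (s x), hax, hbx, add_zero]
    have e1 : (l * l) • x = l • s x + l • s x := by
      have e0 := (hqx x).symm.trans hqx0
      rw [hss0] at e0
      have key : (l * l) • x - (l • s x + l • s x) = 0 - l • s x - l • s x + (l * l) • x := by
        abel
      rw [e0] at key
      exact sub_eq_zero.mp key
    have e2 : (l * l) • s x = 0 := by
      have := congrArg s e1
      simpa only [map_add, map_smul, hss0, smul_zero, add_zero] using this
    have hsx0 : s x = 0 := by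
      rcases smul_eq_zero.mp e2 with h' | h'
      · exact absurd h' hll
      · exact h'
    have e3 : (l * l) • x = 0 := by rw [e1, hsx0, smul_zero, add_zero]
    rcases smul_eq_zero.mp e3 with h' | h'
    · exact absurd h' hll
    · exact h'
  -- (IV) q' (u x) = u (q x)
  have hcomm : ∀ x, q' (u x) = u (q x) := by
    intro x
    rw [hq'x (u x), hqx x, hanti x]
    have h2' : s (-u (s x)) = u (s (s x)) := by
      rw [map_neg, hanti (s x), neg_neg]
    rw [h2']
    simp only [map_add, map_sub, map_smul]
    module
  -- (V) disjointness
  have h4 : (4 : F) ≠ 0 := by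
    have := mul_ne_zero h2F h2F
    rwa [show (2 : F) * 2 = 4 by norm_num] at this
  have hdis : ∀ x, q x = 0 → q' x = 0 → x = 0 := by
    intro x hx hx'
    have e1 : ((4 : F) * l) • s x = q' x - q x := by
      rw [hq'x x, hqx x]
      module
    rw [hx, hx', sub_zero] at e1
    have hsx0 : s x = 0 := by
      rcases smul_eq_zero.mp e1 with h' | h'
      · exact absurd h' (mul_ne_zero h4 hl)
      · exact h'
    have e3 : (l * l) • x = 0 := by
      have e0 := (hqx x).symm.trans hx
      rw [hsx0, map_zero, smul_zero] at e0
      have key : (l * l) • x = 0 - 0 - 0 + (l * l) • x := by abel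
      rw [key, e0]
    rcases smul_eq_zero.mp e3 with h' | h'
    · exact absurd h' hll
    · exact h'
  -- submodule dimension counting
  set Q := LinearMap.ker q with hQdef
  set Q' := LinearMap.ker q' with hQ'def
  have hmapQ : ∀ x ∈ Q, u x ∈ Q' := by
    intro x hx
    have hx' : q x = 0 := hx
    rw [LinearMap.mem_ker, hcomm x, hx', map_zero]
  have hQle : Module.finrank F Q ≤ Module.finrank F Q' := by
    apply LinearMap.finrank_le_finrank_of_injective (f := u.restrict hmapQ)
    intro x y hxy
    have hval : u x.1 = u y.1 := congrArg Subtype.val hxy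
    have hsub : u (x.1 - y.1) = 0 := by rw [map_sub, hval, sub_self]
    have hqsub : q (x.1 - y.1) = 0 := by
      have : x.1 - y.1 ∈ Q := sub_mem x.2 y.2
      exact this
    have := hinj _ hqsub hsub
    exact Subtype.ext (sub_eq_zero.mp this)
  have hdisj : Q ⊓ Q' = ⊥ := by
    rw [eq_bot_iff]
    rintro x ⟨hx, hx'⟩
    have : x = 0 := hdis x hx hx'
    simp [this]
  have hsum : Module.finrank F Q + Module.finrank F Q' ≤ n := by
    have heq := Submodule.finrank_sup_add_finrank_inf_eq Q Q'
    rw [hdisj, finrank_bot, add_zero] at heq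
    rw [← heq]
    have := Submodule.finrank_le (Q ⊔ Q')
    rwa [Module.finrank_fin_fun] at this
  -- relate ker r to Q
  set K := LinearMap.ker r with hKdef
  have hker : Module.finrank F (LinearMap.ker (q ∘ₗ K.subtype)) ≤ Module.finrank F Q := by
    rw [LinearMap.ker_comp, ← Submodule.finrank_map_subtype_eq, Submodule.map_comap_subtype]
    exact Submodule.finrank_mono inf_le_right
  have hrange : Module.finrank F (LinearMap.range (q ∘ₗ K.subtype))
      ≤ Module.finrank F (LinearMap.range r) := by
    apply Submodule.finrank_mono
    rintro y ⟨x, rfl⟩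
    exact ⟨s x.1, (hI x.1 x.2).symm⟩
  have hrn1 := LinearMap.finrank_range_add_finrank_ker (q ∘ₗ K.subtype)
  have hrn2 := LinearMap.finrank_range_add_finrank_ker r
  rw [Module.finrank_fin_fun, ← hKdef] at hrn2
  have hKfin : Module.finrank F ↥K = Module.finrank F ↥K := rfl
  omega
end
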